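/- arXiv:2507.03856 — 2 statements merged into one kernel-verified Lean document; each statement's English description precedes it below -/
import Mathlib

section
/- Let B be a real matrix with columns b_1, ..., b_n each of unit Euclidean norm, and let μ(B) = max_{i≠j} |b_i^T b_j| be its mutual coherence. If s ∈ ℝ^n satisfies B s = 0 and ‖s‖_0 < 1 + 1/μ(B), then s = 0. Equivalently, no nonzero vector in the null space of B has fewer than 1 + 1/μ(B) nonzero entries. -/
/-!
If `B s = 0`, then `s` is also in the kernel of the Gram matrix `G = Bᵀ B`, whose diagonal is `1`
and whose off-diagonal entries are bounded by `μ = μ(B)`. Reading the row of `G s = 0` at an index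
`i` where `|s i|` is largest gives `|s i| ≤ (‖s‖₀ - 1) μ |s i|`, so a nonzero `s` has
`1 ≤ (‖s‖₀ - 1) μ`, i.e. `‖s‖₀ ≥ 1 + 1/μ`.
-/

/-- Mutual coherence of a matrix `B` (whose columns are assumed unit-norm):
the supremum of `|b_i^T b_j|` over pairs of distinct columns. -/
noncomputable def mutualCoherence {d n : ℕ} (B : Matrix (Fin d) (Fin n) ℝ) : ℝ :=
  sSup {x : ℝ | ∃ i j : Fin n, i ≠ j ∧ x = |∑ k, B k i * B k j|}

/-- `‖s‖₀`: the number of nonzero entries of `s`. -/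
noncomputable def l0norm {n : ℕ} (s : Fin n → ℝ) : ℕ :=
  (Finset.univ.filter fun i => s i ≠ 0).card

open Finset Matrix

theorem Matrix.one_le_card_support_sub_one_mul_of_mulVec_eq_zero {ι : Type*} [Fintype ι]
    [DecidableEq ι] (G : Matrix ι ι ℝ) {μ : ℝ} (hdiag : ∀ i, G i i = 1)
    (hoff : ∀ i j, i ≠ j → |G i j| ≤ μ) {s : ι → ℝ} (hs : s ≠ 0) (hGs : G *ᵥ s = 0) :
    1 ≤ ((#{j | s j ≠ 0} : ℝ) - 1) * μ := by
  set T := ({j | s j ≠ 0} : Finset ι)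
  have hT : T.Nonempty := by
    obtain ⟨i, hi⟩ := Function.ne_iff.mp hs
    exact ⟨i, by simpa [T] using hi⟩
  obtain ⟨i, hiT, hmax⟩ := T.exists_max_image (fun j => |s j|) hT
  have hsi : 0 < |s i| := abs_pos.mpr (mem_filter.mp hiT).2
  have hrow : s i = -∑ j ∈ T.erase i, G i j * s j := by
    have h := congrFun hGs i
    rw [Pi.zero_apply, mulVec, dotProduct, ← add_sum_erase _ _ (mem_univ i), hdiag, one_mul] at h
    have hsupp : ∑ j ∈ T.erase i, G i j * s j = ∑ j ∈ univ.erase i, G i j * s j :=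
      sum_subset (erase_subset_erase _ (subset_univ _)) fun j hj hjT => by simp_all [T]
    linarith
  have hbound : |s i| ≤ (T.erase i).card • (μ * |s i|) :=
    calc |s i| = |∑ j ∈ T.erase i, G i j * s j| := by rw [hrow, abs_neg]
      _ ≤ ∑ j ∈ T.erase i, |G i j * s j| := abs_sum_le_sum_abs _ _
      _ ≤ (T.erase i).card • (μ * |s i|) := by
        refine sum_le_card_nsmul _ _ _ fun j hj => ?_
        have hij : i ≠ j := (Ne.symm (mem_erase.mp hj).1)
        rw [abs_mul]
        exact mul_le_mul (hoff i j hij) (hmax j (mem_erase.mp hj).2) (abs_nonneg _)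
          ((abs_nonneg _).trans (hoff i j hij))
  rw [nsmul_eq_mul, card_erase_of_mem hiT, Nat.cast_sub (card_pos.mpr hT), Nat.cast_one] at hbound
  exact le_of_mul_le_mul_left (by linarith) hsi

theorem l0norm_pos {n : ℕ} {s : Fin n → ℝ} (hs : s ≠ 0) : 0 < l0norm s := by
  obtain ⟨i, hi⟩ := Function.ne_iff.mp hs
  exact card_pos.mpr ⟨i, by simpa using hi⟩

theorem abs_sum_mul_le_mutualCoherence {d n : ℕ} (B : Matrix (Fin d) (Fin n) ℝ) {i j : Fin n}
    (hij : i ≠ j) : |∑ k, B k i * B k j| ≤ mutualCoherence B := by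
  refine le_csSup ?_ ⟨i, j, hij, rfl⟩
  refine (Set.finite_range fun p : Fin n × Fin n => |∑ k, B k p.1 * B k p.2|).subset ?_
    |>.bddAbove
  rintro x ⟨i, j, -, rfl⟩
  exact ⟨(i, j), rfl⟩

theorem one_le_l0norm_sub_one_mul_mutualCoherence {d n : ℕ} (B : Matrix (Fin d) (Fin n) ℝ)
    (hunit : ∀ j : Fin n, ∑ k, (B k j) ^ 2 = 1) {s : Fin n → ℝ} (hs : s ≠ 0)
    (hnull : B *ᵥ s = 0) : 1 ≤ ((l0norm s : ℝ) - 1) * mutualCoherence B := by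
  refine (Bᵀ * B).one_le_card_support_sub_one_mul_of_mulVec_eq_zero (fun i => ?_)
    (fun i j hij => ?_) hs (by rw [← mulVec_mulVec, hnull, mulVec_zero])
  · simpa [mul_apply, sq] using hunit i
  · simpa [mul_apply] using abs_sum_mul_le_mutualCoherence B hij

theorem nullspace_spark_bound {d n : ℕ} (B : Matrix (Fin d) (Fin n) ℝ)
    (hunit : ∀ j : Fin n, ∑ k, (B k j) ^ 2 = 1)
    (s : Fin n → ℝ) (hnull : B.mulVec s = 0)
    (hsparse : (l0norm s : ℝ) < 1 + 1 / mutualCoherence B) :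
    s = 0 := by
  by_contra hs
  have hkey := one_le_l0norm_sub_one_mul_mutualCoherence B hunit hs hnull
  have hμ : 0 < mutualCoherence B := by
    by_contra! hμ
    have hone : (1 : ℝ) ≤ l0norm s := by exact_mod_cast l0norm_pos hs
    linarith [mul_nonpos_of_nonneg_of_nonpos (sub_nonneg.mpr hone) hμ]
  have hinv : 1 / mutualCoherence B ≤ (l0norm s : ℝ) - 1 := by
    rw [div_le_iff₀ hμ]; linarith
  linarith
end

section
/- Let X ∈ ℝ^{(m-1)×r} with m > r + 2, suppose [X 1] has full column rank, and let R̄ ∈ ℝ^{(m-r-2)×(m-1)} have rows forming an orthonormal basis of the null space of [X 1]^T. Assume the columns of R̄ are nonzero and let μ(R̄) be the mutual coherence of R̄ after normalizing its columns to unit norm. Suppose m̃_j = X q_j + s_j + c_j 1 where s_j ∈ ℝ^{m-1} is k-sparse and k < 1 + 1/μ(R̄). Then R̄ m̃_j = 0 if and only if s_j = 0. In particular, applying R̄ to the measurement matrix whose columns are the m̃_j, the zero columns of the product are exactly those of the uncorrupted target nodes. -/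
/-!
Since `R̄` annihilates the columns of `[X 1]`, `R̄ m̃ⱼ = R̄ sⱼ`, so it suffices that `R̄` has no
nonzero `k`-sparse kernel vector. Normalizing the columns of `R̄` multiplies its kernel vectors
by a positive diagonal matrix, which preserves their supports. For `B` with unit-norm columns
and coherence `μ`, the Gram matrix `BᵀB` has unit diagonal and off-diagonal entries bounded
by `μ`, so for `Bt = 0`
  `0 = tᵀBᵀBt ≥ (1 + μ)‖t‖₂² - μ‖t‖₁² ≥ (1 + μ - μ‖t‖₀)‖t‖₂²`
by Cauchy–Schwarz on the support of `t`; this forces `t = 0` once `‖t‖₀ μ < 1 + μ`.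
-/

open Matrix

/-- Normalize each column of a matrix to unit Euclidean norm. -/
noncomputable def colNormalize {d n : ℕ} (B : Matrix (Fin d) (Fin n) ℝ) :
    Matrix (Fin d) (Fin n) ℝ :=
  Matrix.of fun i j => B i j / Real.sqrt (∑ k, B k j ^ 2)

/-- The augmented matrix `[X 1]` obtained by adjoining the all-ones column to `X`. -/
noncomputable def augOnes {d r : ℕ} (X : Matrix (Fin d) (Fin r) ℝ) :
    Matrix (Fin d) (Fin (r + 1)) ℝ :=
  Matrix.of fun i j => if h : (j : ℕ) < r then X i ⟨j, h⟩ else 1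

section

variable {d n : ℕ}

lemma abs_sum_le_mutualCoherence (B : Matrix (Fin d) (Fin n) ℝ) {i j : Fin n}
    (hij : i ≠ j) : |∑ k, B k i * B k j| ≤ mutualCoherence B := by
  refine le_csSup ?_ ⟨i, j, hij, rfl⟩
  refine (Set.finite_range fun p : Fin n × Fin n => |∑ k, B k p.1 * B k p.2|).subset ?_
    |>.bddAbove
  rintro x ⟨i, j, -, rfl⟩
  exact ⟨(i, j), rfl⟩

lemma mutualCoherence_nonneg (B : Matrix (Fin d) (Fin n) ℝ) :
    0 ≤ mutualCoherence B :=
  Real.sSup_nonneg <| by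
    rintro x ⟨i, j, -, rfl⟩
    exact abs_nonneg _

lemma mul_lt_one_add_of_lt_one_add_inv {x μ : ℝ} (hμ : 0 ≤ μ) (h : x < 1 + 1 / μ) :
    x * μ < 1 + μ := by
  rcases hμ.eq_or_lt with rfl | hμ
  · simp
  · calc x * μ < (1 + 1 / μ) * μ := mul_lt_mul_of_pos_right h hμ
      _ = 1 + μ := by field_simp; ring

lemma sq_sum_abs_le_l0norm_mul_sum_sq (t : Fin n → ℝ) :
    (∑ i, |t i|) ^ 2 ≤ l0norm t * ∑ i, t i ^ 2 := by
  have hsupp {f : ℝ → ℝ} (hf : ∀ x, f x ≠ 0 → x ≠ 0) :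
      ∑ i with t i ≠ 0, f (t i) = ∑ i, f (t i) :=
    Finset.sum_filter_of_ne fun i _ => hf (t i)
  calc (∑ i, |t i|) ^ 2 = (∑ i with t i ≠ 0, |t i|) ^ 2 := by
        rw [hsupp fun x hx => abs_ne_zero.mp hx]
    _ ≤ l0norm t * ∑ i with t i ≠ 0, |t i| ^ 2 := sq_sum_le_card_mul_sum_sq
    _ = l0norm t * ∑ i, t i ^ 2 := by
        simp_rw [sq_abs]
        rw [hsupp fun x hx => pow_ne_zero_iff two_ne_zero |>.mp hx]

lemma one_add_mul_sum_sq_sub_le_dotProduct_mulVec (G : Matrix (Fin n) (Fin n) ℝ)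
    {μ : ℝ} (hdiag : ∀ i, G i i = 1) (hoff : ∀ i j, i ≠ j → |G i j| ≤ μ) (t : Fin n → ℝ) :
    (1 + μ) * ∑ i, t i ^ 2 - μ * (∑ i, |t i|) ^ 2 ≤ t ⬝ᵥ G *ᵥ t := by
  have hterm : ∀ i j, (if i = j then (1 + μ) * t i ^ 2 else 0) - μ * (|t i| * |t j|)
      ≤ t i * (G i j * t j) := by
    intro i j
    by_cases hij : i = j
    · subst hij
      refine le_of_eq ?_
      rw [if_pos rfl, hdiag, abs_mul_abs_self]
      ring
    · rw [if_neg hij, zero_sub, neg_le]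
      calc -(t i * (G i j * t j)) ≤ |t i * (G i j * t j)| := neg_le_abs _
        _ = |G i j| * (|t i| * |t j|) := by rw [abs_mul, abs_mul]; ring
        _ ≤ μ * (|t i| * |t j|) := by gcongr; exact hoff i j hij
  calc (1 + μ) * ∑ i, t i ^ 2 - μ * (∑ i, |t i|) ^ 2
      = ∑ i, ∑ j, ((if i = j then (1 + μ) * t i ^ 2 else 0) - μ * (|t i| * |t j|)) := by
        simp only [Finset.sum_sub_distrib, Finset.sum_ite_eq, Finset.mem_univ, if_true,
          ← Finset.mul_sum, ← Finset.sum_mul, sq]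
    _ ≤ ∑ i, ∑ j, t i * (G i j * t j) :=
        Finset.sum_le_sum fun i _ => Finset.sum_le_sum fun j _ => hterm i j
    _ = t ⬝ᵥ G *ᵥ t := by simp only [dotProduct, mulVec, Finset.mul_sum]

theorem eq_zero_of_mulVec_eq_zero_of_coherence (B : Matrix (Fin d) (Fin n) ℝ) {μ : ℝ}
    (hμ : 0 ≤ μ) (hunit : ∀ j, ∑ i, B i j ^ 2 = 1)
    (hcoh : ∀ i j, i ≠ j → |∑ k, B k i * B k j| ≤ μ)
    {t : Fin n → ℝ} (hsparse : l0norm t * μ < 1 + μ) (ht : B *ᵥ t = 0) : t = 0 := by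
  have hgram : t ⬝ᵥ (Bᵀ * B) *ᵥ t = 0 := by
    rw [← mulVec_mulVec, ht, mulVec_zero, dotProduct_zero]
  have hquad := one_add_mul_sum_sq_sub_le_dotProduct_mulVec (Bᵀ * B)
    (fun j => by simpa [mul_apply, sq] using hunit j)
    (fun i j hij => by simpa [mul_apply] using hcoh i j hij) t
  have hS : 0 ≤ ∑ i, t i ^ 2 := Finset.sum_nonneg fun i _ => sq_nonneg (t i)
  have hS0 : ∑ i, t i ^ 2 = 0 := by
    nlinarith [mul_le_mul_of_nonneg_left (sq_sum_abs_le_l0norm_mul_sum_sq t) hμ]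
  funext i
  exact pow_eq_zero_iff two_ne_zero |>.mp <|
    (Finset.sum_eq_zero_iff_of_nonneg fun i _ => sq_nonneg (t i)).mp hS0 i (Finset.mem_univ i)

noncomputable def colNorm (R : Matrix (Fin d) (Fin n) ℝ) (j : Fin n) : ℝ :=
  √(∑ i, R i j ^ 2)

lemma colNormalize_apply (R : Matrix (Fin d) (Fin n) ℝ) (i : Fin d) (j : Fin n) :
    colNormalize R i j = R i j / colNorm R j :=
  rfl

lemma colNorm_pos {R : Matrix (Fin d) (Fin n) ℝ} {j : Fin n} (hj : ∃ i, R i j ≠ 0) :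
    0 < colNorm R j := by
  obtain ⟨i, hi⟩ := hj
  exact Real.sqrt_pos.mpr <| lt_of_lt_of_le (by positivity)
    (Finset.single_le_sum (fun k _ => sq_nonneg (R k j)) (Finset.mem_univ i))

lemma sum_sq_colNormalize {R : Matrix (Fin d) (Fin n) ℝ} {j : Fin n}
    (hj : ∃ i, R i j ≠ 0) : ∑ i, colNormalize R i j ^ 2 = 1 := by
  have hpos := colNorm_pos hj
  have hsq : colNorm R j ^ 2 = ∑ i, R i j ^ 2 :=
    Real.sq_sqrt (Finset.sum_nonneg fun i _ => sq_nonneg (R i j))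
  simp only [colNormalize_apply, div_pow, ← Finset.sum_div]
  rw [← hsq, div_self (by positivity)]

lemma colNormalize_mulVec {R : Matrix (Fin d) (Fin n) ℝ} (hR : ∀ j, ∃ i, R i j ≠ 0)
    (s : Fin n → ℝ) : colNormalize R *ᵥ (fun j => colNorm R j * s j) = R *ᵥ s := by
  ext i
  simp only [mulVec, dotProduct]
  refine Finset.sum_congr rfl fun j _ => ?_
  have := (colNorm_pos (hR j)).ne'
  rw [colNormalize_apply]
  field_simp

lemma l0norm_mul_of_ne_zero {w : Fin n → ℝ} (hw : ∀ i, w i ≠ 0) (s : Fin n → ℝ) :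
    l0norm (fun i => w i * s i) = l0norm s := by
  simp only [l0norm, ne_eq, mul_eq_zero, hw, false_or]

theorem mulVec_eq_zero_iff_of_l0norm_mul_mutualCoherence_lt
    {R : Matrix (Fin d) (Fin n) ℝ} (hR : ∀ j, ∃ i, R i j ≠ 0) {s : Fin n → ℝ}
    (hs : l0norm s * mutualCoherence (colNormalize R) < 1 + mutualCoherence (colNormalize R)) :
    R *ᵥ s = 0 ↔ s = 0 := by
  refine ⟨fun h => ?_, fun h => by rw [h, mulVec_zero]⟩
  have hw : ∀ j, colNorm R j ≠ 0 := fun j => (colNorm_pos (hR j)).ne'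
  have hzero := eq_zero_of_mulVec_eq_zero_of_coherence (colNormalize R)
    (mutualCoherence_nonneg _) (fun j => sum_sq_colNormalize (hR j))
    (fun i j => abs_sum_le_mutualCoherence _) (t := fun j => colNorm R j * s j)
    (by rwa [l0norm_mul_of_ne_zero hw]) (by rw [colNormalize_mulVec hR, h])
  funext j
  simpa [hw j] using congrFun hzero j

end

lemma augOnes_mulVec_snoc {d r : ℕ} (X : Matrix (Fin d) (Fin r) ℝ) (q : Fin r → ℝ) (c : ℝ) :
    augOnes X *ᵥ Fin.snoc q c = X *ᵥ q + c • 1 := by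
  ext i
  simp [augOnes, mulVec, dotProduct, Fin.sum_univ_castSucc]

theorem identification_of_corrupted_nodes_general {m r n : ℕ}
    (X : Matrix (Fin (m - 1)) (Fin r) ℝ)
    -- rows of `R̄` form an orthonormal basis of the null space of `[X 1]ᵀ`
    (R : Matrix (Fin (m - r - 2)) (Fin (m - 1)) ℝ)
    (hnull : R * augOnes X = 0)
    -- columns of `R̄` are nonzero
    (hcols : ∀ j, ∃ i, R i j ≠ 0)
    (k : ℕ)
    (hcoh : (k : ℝ) < 1 + 1 / mutualCoherence (colNormalize R))
    -- measurement model for the `n` target nodes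
    (q : Fin n → Fin r → ℝ) (s : Fin n → Fin (m - 1) → ℝ) (c : Fin n → ℝ)
    (mt : Fin n → Fin (m - 1) → ℝ)
    (hsparse : ∀ j, l0norm (s j) ≤ k)
    (hmt : ∀ j, mt j = X.mulVec (q j) + s j + c j • (1 : Fin (m - 1) → ℝ)) :
    ∀ j : Fin n, R.mulVec (mt j) = 0 ↔ s j = 0 := by
  intro j
  have hμ := mutualCoherence_nonneg (colNormalize R)
  have hRmt : R *ᵥ mt j = R *ᵥ s j := by
    rw [hmt, add_right_comm, ← augOnes_mulVec_snoc, mulVec_add, mulVec_mulVec, hnull,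
      zero_mulVec, zero_add]
  rw [hRmt]
  refine mulVec_eq_zero_iff_of_l0norm_mul_mutualCoherence_lt hcols ?_
  calc (l0norm (s j) : ℝ) * mutualCoherence (colNormalize R)
      ≤ k * mutualCoherence (colNormalize R) :=
        mul_le_mul_of_nonneg_right (by exact_mod_cast hsparse j) hμ
    _ < 1 + mutualCoherence (colNormalize R) := mul_lt_one_add_of_lt_one_add_inv hμ hcoh

theorem identification_of_corrupted_nodes {m r n : ℕ} (hm : m > r + 2)
    (X : Matrix (Fin (m - 1)) (Fin r) ℝ)
    -- `[X 1]` has full column rank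
    (hrank : (augOnes X).rank = r + 1)
    -- rows of `R̄` form an orthonormal basis of the null space of `[X 1]ᵀ`
    (R : Matrix (Fin (m - r - 2)) (Fin (m - 1)) ℝ)
    (horth : R * Rᵀ = 1)
    (hnull : R * augOnes X = 0)
    -- columns of `R̄` are nonzero
    (hcols : ∀ j, ∃ i, R i j ≠ 0)
    (k : ℕ)
    (hcoh : (k : ℝ) < 1 + 1 / mutualCoherence (colNormalize R))
    -- measurement model for the `n` target nodes
    (q : Fin n → Fin r → ℝ) (s : Fin n → Fin (m - 1) → ℝ) (c : Fin n → ℝ)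
    (mt : Fin n → Fin (m - 1) → ℝ)
    (hsparse : ∀ j, l0norm (s j) ≤ k)
    (hmt : ∀ j, mt j = X.mulVec (q j) + s j + c j • (1 : Fin (m - 1) → ℝ)) :
    ∀ j : Fin n, R.mulVec (mt j) = 0 ↔ s j = 0 :=
  identification_of_corrupted_nodes_general X R hnull hcols k hcoh q s c mt hsparse hmt
end
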